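/- arXiv:1010.5335 — 4 statements merged into one kernel-verified Lean document; each statement's English description precedes it below -/
import Mathlib

section
/- Let N ≥ 3 be odd and φ ∈ ℝ^N. If θ (with θ_N = 0) is a stationary point of F_φ, then there exist q_1,…,q_{N−1} ∈ {0,1} and an integer l such that, setting D := 1 + Σ_{k=1}^{N−1} (−1)^{q_k} (which is a nonzero odd integer since N is odd) and σ := (Φ + 2πl − π Σ_{k=1}^{N−1} q_k)/D, one has s_N ≡ σ (mod 2π) and s_k ≡ (−1)^{q_k} σ + q_k π (mod 2π) for every k = 1,…,N−1. Conversely, for every choice of q_1,…,q_{N−1} ∈ {0,1} and l ∈ ℤ, the configuration θ (with θ_N = 0) determined by these congruences is a stationary point of F_φ. -/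
open Real Filter

/-- The variable `s k = φ k + θ (k+1) - θ k` (indices cyclic mod `N`,
0-based; paper index `k` corresponds to `k-1` here, so `s_N` is `sVar` at `lastIdx`). -/
noncomputable def sVar (N : ℕ) (hN : 0 < N) (φ θ : Fin N → ℝ) (k : Fin N) : ℝ :=
  φ k + θ ⟨((k : ℕ) + 1) % N, Nat.mod_lt _ hN⟩ - θ k

/-- The lattice Landau gauge functional / random phase XY Hamiltonian
`F_φ(θ) = Σ_k (1 - cos(φ_k + θ_{k+1} - θ_k))` with periodic boundary conditions. -/
noncomputable def Fxy (N : ℕ) (hN : 0 < N) (φ θ : Fin N → ℝ) : ℝ :=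
  ∑ k : Fin N, (1 - Real.cos (sVar N hN φ θ k))

/-- The index of the fixed site (paper site `N`). -/
def lastIdx (N : ℕ) (hN : 0 < N) : Fin N :=
  ⟨N - 1, Nat.sub_lt hN Nat.one_pos⟩

/-- `θ` is a stationary point of `F_φ` regarded as a function of the free
coordinates `θ_1, …, θ_{N-1}` (0-based: coordinates `k` with `k < N-1`),
with `θ` at `lastIdx` held fixed: all partial derivatives vanish. -/
noncomputable def IsStationaryPt (N : ℕ) (hN : 0 < N) (φ θ : Fin N → ℝ) : Prop :=
  ∀ k : Fin N, (k : ℕ) < N - 1 →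
    deriv (fun t : ℝ => Fxy N hN φ (Function.update θ k t)) (θ k) = 0

/-- The `(N-1) × (N-1)` tridiagonal matrix with entries
`δ_{ij}(c_{i-1} + c_i) - δ_{i-1,j} c_{i-1} - δ_{i+1,j} c_i`, where indices are
0-based (paper index `i` ↦ `i-1`) and `c_0 := c_N` (cyclic predecessor). -/
noncomputable def hessC (N : ℕ) (hN : 0 < N) (c : Fin N → ℝ) :
    Matrix (Fin (N - 1)) (Fin (N - 1)) ℝ :=
  Matrix.of fun i j =>
    (if i = j then
        c ⟨((i : ℕ) + (N - 1)) % N, Nat.mod_lt _ hN⟩ +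
          c ⟨(i : ℕ), lt_of_lt_of_le i.isLt (Nat.sub_le N 1)⟩
      else 0)
    - (if (i : ℕ) = (j : ℕ) + 1 then c ⟨((i : ℕ) + (N - 1)) % N, Nat.mod_lt _ hN⟩ else 0)
    - (if (j : ℕ) = (i : ℕ) + 1 then c ⟨(i : ℕ), lt_of_lt_of_le i.isLt (Nat.sub_le N 1)⟩ else 0)

/-- The Hessian of `F_φ` (with the last coordinate fixed) at a configuration `θ`. -/
noncomputable def hessAt (N : ℕ) (hN : 0 < N) (φ θ : Fin N → ℝ) :
    Matrix (Fin (N - 1)) (Fin (N - 1)) ℝ :=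
  hessC N hN fun k => Real.cos (sVar N hN φ θ k)

/-- `F_φ` as a function of the free coordinates only: the coordinate at
`lastIdx` is overwritten by `0`. -/
noncomputable def FxyFixed (N : ℕ) (hN : 0 < N) (φ : Fin N → ℝ) (η : Fin N → ℝ) : ℝ :=
  Fxy N hN φ (Function.update η (lastIdx N hN) 0)

/-- The value `σ = (Φ + 2πl - π Σ_{k=1}^{N-1} q_k) / (1 + Σ_{k=1}^{N-1} (-1)^{q_k})`. -/
noncomputable def sigmaVal (N : ℕ) (hN : 0 < N) (φ : Fin N → ℝ) (q : Fin N → ℕ) (l : ℤ) : ℝ :=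
  ((∑ k, φ k) + 2 * Real.pi * (l : ℝ)
      - Real.pi * ∑ k ∈ Finset.univ.erase (lastIdx N hN), (q k : ℝ)) /
    (1 + ∑ k ∈ Finset.univ.erase (lastIdx N hN), (-1 : ℝ) ^ (q k))

/-! The partial derivative of `F_φ` in `θ_j` is `sin s_{j-1} - sin s_j`, so `θ` is stationary
exactly when all `sin s_k` coincide, i.e. when every `s_k ≡ (-1)^{q_k} s_N + q_k π (mod 2π)`.
Since the `θ_k` telescope, `Σ s_k = Φ`; substituting gives `D · s_N = Φ + 2πl - π Σ q_k` for
some integer `l`, and `D = 1 + Σ (-1)^{q_k}` is a sum of `N` odd numbers, hence nonzero. -/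

open Finset Function

lemma even_sum_neg_one_pow_iff {ι : Type*} (s : Finset ι) (f : ι → ℕ) :
    Even (∑ i ∈ s, (-1 : ℤ) ^ f i) ↔ Even #s := by
  rw [← ZMod.intCast_eq_zero_iff_even, ← ZMod.natCast_eq_zero_iff_even]
  push_cast
  simp [ZMod.neg_eq_self_mod_two]

lemma sin_eq_sin_iff_exists_neg_one_pow {x y : ℝ} :
    sin x = sin y ↔ ∃ q : ℕ, q ≤ 1 ∧ ∃ m : ℤ, x = (-1) ^ q * y + q * π + 2 * π * m := by
  rw [eq_comm, Real.sin_eq_sin_iff]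
  constructor
  · rintro ⟨m, h | h⟩
    · exact ⟨0, zero_le_one, m, by rw [h]; simp; ring⟩
    · exact ⟨1, le_rfl, m, by rw [h]; push_cast; ring⟩
  · rintro ⟨q, hq, m, rfl⟩
    interval_cases q
    · exact ⟨m, Or.inl (by push_cast; ring)⟩
    · exact ⟨m, Or.inr (by push_cast; ring)⟩

variable {N : ℕ}

lemma val_lt_pred_iff_ne_lastIdx (hN : 0 < N) (k : Fin N) :
    (k : ℕ) < N - 1 ↔ k ≠ lastIdx N hN := by
  simp only [Ne, Fin.ext_iff, lastIdx]
  omega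

section Cyclic

variable [NeZero N] (hN : 0 < N)

lemma mk_add_one_mod_eq (k : Fin N) :
    (⟨((k : ℕ) + 1) % N, Nat.mod_lt _ hN⟩ : Fin N) = k + 1 := by
  ext
  simp [Fin.val_add, Nat.add_mod]

lemma lastIdx_add_one : lastIdx N hN + 1 = ⟨0, hN⟩ := by
  rw [← mk_add_one_mod_eq hN]
  ext
  simp [lastIdx, Nat.sub_add_cancel hN]

lemma mk_add_one {n : ℕ} (hn : n + 1 < N) : (⟨n, by omega⟩ : Fin N) + 1 = ⟨n + 1, hn⟩ := by
  rw [← mk_add_one_mod_eq (by omega)]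
  ext
  exact Nat.mod_eq_of_lt hn

lemma sVar_apply (φ θ : Fin N → ℝ) (k : Fin N) :
    sVar N hN φ θ k = φ k + θ (k + 1) - θ k := by
  rw [sVar, mk_add_one_mod_eq hN]

lemma sum_sVar (φ θ : Fin N → ℝ) : ∑ k, sVar N hN φ θ k = ∑ k, φ k := by
  have hshift : ∑ k, θ (k + 1) = ∑ k, θ k := Equiv.sum_comp (Equiv.addRight 1) θ
  simp only [sVar_apply, sum_sub_distrib, sum_add_distrib, hshift, add_sub_cancel_right]

lemma hasDerivAt_Fxy_update (φ θ : Fin N → ℝ) {i j : Fin N} (hij : i + 1 = j) :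
    HasDerivAt (fun t => Fxy N hN φ (update θ j t))
      (sin (sVar N hN φ θ i) - sin (sVar N hN φ θ j)) (θ j) := by
  have hcoord : ∀ k, HasDerivAt (fun t => update θ j t k) ((Pi.single j 1 : Fin N → ℝ) k) (θ j) :=
    hasDerivAt_pi.1 (hasDerivAt_update θ j (θ j))
  have hterm : ∀ k, HasDerivAt (fun t => 1 - cos (sVar N hN φ (update θ j t) k))
      (sin (sVar N hN φ θ k) *
        ((Pi.single j 1 : Fin N → ℝ) (k + 1) - (Pi.single j 1 : Fin N → ℝ) k)) (θ j) := by
    intro k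
    simp only [sVar_apply]
    simpa using (((hcoord (k + 1)).const_add (φ k)).sub (hcoord k)).cos.const_sub 1
  refine (HasDerivAt.fun_sum (u := univ) fun k _ => hterm k).congr_deriv ?_
  subst hij
  simp only [Pi.single_apply, add_left_inj, mul_sub, mul_ite, mul_one, mul_zero, sum_sub_distrib,
    sum_ite_eq', mem_univ, if_true]

theorem isStationaryPt_iff (φ θ : Fin N → ℝ) :
    IsStationaryPt N hN φ θ ↔
      ∀ k, sin (sVar N hN φ θ k) = sin (sVar N hN φ θ (lastIdx N hN)) := by
  have hderiv : ∀ {i j : Fin N}, i + 1 = j →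
      deriv (fun t => Fxy N hN φ (update θ j t)) (θ j)
        = sin (sVar N hN φ θ i) - sin (sVar N hN φ θ j) :=
    fun hij => (hasDerivAt_Fxy_update hN φ θ hij).deriv
  constructor
  · intro hstat
    have hchain : ∀ n (hn : n < N - 1),
        sin (sVar N hN φ θ ⟨n, by omega⟩) = sin (sVar N hN φ θ (lastIdx N hN)) := by
      intro n hn
      have hstat_n := hstat ⟨n, by omega⟩ hn
      induction n with
      | zero =>
        rw [hderiv (lastIdx_add_one hN)] at hstat_n
        linarith
      | succ n ih =>
        rw [hderiv (mk_add_one (by omega))] at hstat_n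
        rw [← ih (by omega) (hstat ⟨n, by omega⟩ (show n < N - 1 by omega))]
        linarith
    intro k
    rcases ne_or_eq k (lastIdx N hN) with hk | rfl
    · exact hchain k ((val_lt_pred_iff_ne_lastIdx hN k).2 hk)
    · rfl
  · intro h j _
    rw [hderiv (sub_add_cancel j 1), h (j - 1), h j, sub_self]

end Cyclic

lemma one_add_sum_erase_neg_one_pow_ne_zero (hN : 0 < N) (hodd : Odd N) (q : Fin N → ℕ) :
    (1 : ℝ) + ∑ k ∈ univ.erase (lastIdx N hN), (-1 : ℝ) ^ q k ≠ 0 := by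
  have heven : Even (∑ k ∈ univ.erase (lastIdx N hN), (-1 : ℤ) ^ q k) := by
    rw [even_sum_neg_one_pow_iff, card_erase_of_mem (mem_univ _), card_univ, Fintype.card_fin]
    exact Nat.Odd.sub_odd hodd odd_one
  have hD : (1 + ∑ k ∈ univ.erase (lastIdx N hN), (-1 : ℤ) ^ q k) ≠ 0 := by
    intro h0
    exact Int.not_odd_zero (h0 ▸ heven.one_add)
  exact_mod_cast hD

lemma sVar_lastIdx_eq_sigmaVal [NeZero N] (hN : 0 < N) (hodd : Odd N) (φ θ : Fin N → ℝ)
    (q : Fin N → ℕ) (m : Fin N → ℤ)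
    (hs : ∀ k ≠ lastIdx N hN, sVar N hN φ θ k
      = (-1) ^ q k * sVar N hN φ θ (lastIdx N hN) + q k * π + 2 * π * m k) :
    sVar N hN φ θ (lastIdx N hN)
      = sigmaVal N hN φ q (-∑ k ∈ univ.erase (lastIdx N hN), m k) := by
  rw [sigmaVal, eq_div_iff (one_add_sum_erase_neg_one_pow_ne_zero hN hodd q), ← sum_sVar hN φ θ,
    ← add_sum_erase _ _ (mem_univ (lastIdx N hN)),
    sum_congr rfl fun k hk => hs k (ne_of_mem_erase hk)]
  simp only [sum_add_distrib, ← sum_mul, ← mul_sum]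
  push_cast
  ring

/-- classification of all stationary points of `F_φ` for odd `N`.
Forward: every stationary point (with `θ_N = 0`) is labelled by
`q_1, …, q_{N-1} ∈ {0,1}` and `l ∈ ℤ` with `s_N ≡ σ` and
`s_k ≡ (-1)^{q_k} σ + q_k π (mod 2π)`, where
`σ = (Φ + 2πl - π Σ q_k)/(1 + Σ (-1)^{q_k})`.
Conversely, every configuration (with `θ_N = 0`) satisfying these congruences
is a stationary point. -/
theorem stmt1 (N : ℕ) (hN : 3 ≤ N) (hodd : Odd N) (φ : Fin N → ℝ) :
    (∀ θ : Fin N → ℝ, θ (lastIdx N (by omega)) = 0 → IsStationaryPt N (by omega) φ θ →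
      ∃ (q : Fin N → ℕ) (l : ℤ), (∀ k, q k ≤ 1) ∧ q (lastIdx N (by omega)) = 0 ∧
        (∃ m : ℤ, sVar N (by omega) φ θ (lastIdx N (by omega)) =
          sigmaVal N (by omega) φ q l + 2 * π * m) ∧
        (∀ k : Fin N, (k : ℕ) < N - 1 →
          ∃ m : ℤ, sVar N (by omega) φ θ k =
            (-1 : ℝ) ^ (q k) * sigmaVal N (by omega) φ q l + (q k : ℝ) * π + 2 * π * m))
    ∧
    (∀ (q : Fin N → ℕ) (l : ℤ), (∀ k, q k ≤ 1) → q (lastIdx N (by omega)) = 0 →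
      ∀ θ : Fin N → ℝ, θ (lastIdx N (by omega)) = 0 →
        (∃ m : ℤ, sVar N (by omega) φ θ (lastIdx N (by omega)) =
          sigmaVal N (by omega) φ q l + 2 * π * m) →
        (∀ k : Fin N, (k : ℕ) < N - 1 →
          ∃ m : ℤ, sVar N (by omega) φ θ k =
            (-1 : ℝ) ^ (q k) * sigmaVal N (by omega) φ q l + (q k : ℝ) * π + 2 * π * m) →
        IsStationaryPt N (by omega) φ θ) := by
  have hN0 : 0 < N := by omega
  have : NeZero N := ⟨hN0.ne'⟩
  constructor
  · intro θ _ hstat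
    have hrep : ∀ k, ∃ qk : ℕ, qk ≤ 1 ∧ ∃ mk : ℤ, (k = lastIdx N hN0 → qk = 0) ∧
        sVar N hN0 φ θ k = (-1) ^ qk * sVar N hN0 φ θ (lastIdx N hN0) + qk * π + 2 * π * mk := by
      intro k
      rcases eq_or_ne k (lastIdx N hN0) with rfl | hk
      · exact ⟨0, zero_le_one, 0, fun _ => rfl, by simp⟩
      · obtain ⟨qk, hqk, mk, h⟩ :=
          sin_eq_sin_iff_exists_neg_one_pow.1 ((isStationaryPt_iff hN0 φ θ).1 hstat k)
        exact ⟨qk, hqk, mk, fun h' => absurd h' hk, h⟩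
    choose q hq m hq_last hs using hrep
    have hσ := sVar_lastIdx_eq_sigmaVal hN0 hodd φ θ q m fun k _ => hs k
    exact ⟨q, _, hq, hq_last _ rfl, ⟨0, by rw [← hσ]; simp⟩, fun k _ => ⟨m k, hσ ▸ hs k⟩⟩
  · intro q l hq _ θ _ ⟨m_last, hs_last⟩ hs
    have hsin : ∀ k, sin (sVar N hN0 φ θ k) = sin (sigmaVal N hN0 φ q l) := by
      intro k
      rcases eq_or_ne k (lastIdx N hN0) with rfl | hk
      · exact sin_eq_sin_iff_exists_neg_one_pow.2 ⟨0, zero_le_one, m_last, by simpa using hs_last⟩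
      · obtain ⟨m, hm⟩ := hs k ((val_lt_pred_iff_ne_lastIdx hN0 k).2 hk)
        exact sin_eq_sin_iff_exists_neg_one_pow.2 ⟨q k, hq k, m, hm⟩
    exact (isStationaryPt_iff hN0 φ θ).2 fun k => by rw [hsin, hsin]
end

section
/- For every odd integer N ≥ 3, the number of stationary points of F_φ satisfies Σ_{j=0}^{N−1} |N − 2j| · C(N−1, j) = N! / (((N−1)/2)!)², where C(N−1, j) denotes the binomial coefficient. -/
open Real Filter

/-! Write `N = 2m + 1`. The signed weights `(n - 2j) C(n, j)` telescope, since
`(n - j) C(n, j) = (j + 1) C(n, j + 1)`. Splitting the sum at `j = m`, where the sign of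
`2m + 1 - 2j` changes, and reflecting the upper half by `j ↦ 2m - j` turns the sum of
absolute values into two such telescoping sums, giving `(2m + 1) C(2m, m) = N! / (m!)²`. -/

theorem Finset.sum_range_two_mul_add_one {M : Type*} [AddCommMonoid M] (f : ℕ → M) (m : ℕ) :
    ∑ j ∈ Finset.range (2 * m + 1), f j =
      ∑ j ∈ Finset.range (m + 1), f j + ∑ i ∈ Finset.range m, f (2 * m - i) := by
  rw [show 2 * m + 1 = (m + 1) + m by omega, Finset.sum_range_add,
    ← Finset.sum_range_reflect (fun i => f (2 * m - i)) m]
  congr 1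
  refine Finset.sum_congr rfl fun i hi => ?_
  rw [Finset.mem_range] at hi
  congr 1
  omega

namespace Nat

variable {R : Type*}

theorem cast_sub_mul_choose [CommRing R] (n k : ℕ) :
    ((n : R) - k) * n.choose k = (k + 1) * n.choose (k + 1) := by
  rcases le_or_gt k n with hkn | hnk
  · have h := congrArg (Nat.cast : ℕ → R) (choose_succ_right_eq n k)
    push_cast [Nat.cast_sub hkn] at h
    linear_combination -h
  · simp [choose_eq_zero_of_lt hnk, choose_eq_zero_of_lt (hnk.trans k.lt_succ_self)]

theorem sum_range_sub_two_mul_mul_choose [CommRing R] (n k : ℕ) :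
    ∑ j ∈ Finset.range k, ((n : R) - 2 * j) * n.choose j = k * n.choose k := by
  induction k with
  | zero => simp
  | succ k ih =>
    rw [Finset.sum_range_succ, ih]
    push_cast
    linear_combination cast_sub_mul_choose (R := R) n k

theorem sum_range_abs_sub_two_mul_mul_choose [CommRing R] [LinearOrder R] [IsStrictOrderedRing R]
    (m : ℕ) :
    ∑ j ∈ Finset.range (2 * m + 1), |((2 * m + 1 : ℕ) : R) - 2 * j| * (2 * m).choose j =
      (2 * m + 1) * (2 * m).choose m := by
  have lower : ∑ j ∈ Finset.range (m + 1), |((2 * m + 1 : ℕ) : R) - 2 * j| * (2 * m).choose j =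
      ∑ j ∈ Finset.range (m + 1), ((((2 * m : ℕ) : R) - 2 * j) * (2 * m).choose j +
        (2 * m).choose j) := by
    refine Finset.sum_congr rfl fun j hj => ?_
    have hjm : (j : R) ≤ m := by exact_mod_cast Finset.mem_range_succ_iff.mp hj
    rw [abs_of_nonneg (by push_cast; linarith)]
    push_cast
    ring
  have upper : ∑ i ∈ Finset.range m,
      |((2 * m + 1 : ℕ) : R) - 2 * (2 * m - i : ℕ)| * (2 * m).choose (2 * m - i) =
      ∑ i ∈ Finset.range m, ((((2 * m : ℕ) : R) - 2 * i) * (2 * m).choose i -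
        (2 * m).choose i) := by
    refine Finset.sum_congr rfl fun i hi => ?_
    have him : i + 1 ≤ m := Finset.mem_range.mp hi
    have him' : (i : R) + 1 ≤ m := by exact_mod_cast him
    rw [choose_symm (by omega), Nat.cast_sub (by omega), abs_of_nonpos (by push_cast; linarith)]
    push_cast
    ring
  rw [Finset.sum_range_two_mul_add_one, lower, upper, Finset.sum_add_distrib, Finset.sum_sub_distrib,
    sum_range_sub_two_mul_mul_choose, sum_range_sub_two_mul_mul_choose, Finset.sum_range_succ]
  have central := cast_sub_mul_choose (R := R) (2 * m) m
  push_cast at central ⊢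
  linear_combination -central

end Nat

theorem stmt2_general (N : ℕ) (hodd : Odd N) :
    ∑ j ∈ Finset.range N, |(N : ℝ) - 2 * j| * ((N - 1).choose j : ℝ) =
      (N.factorial : ℝ) / (((N - 1) / 2).factorial : ℝ) ^ 2 := by
  obtain ⟨m, rfl⟩ := hodd
  rw [show 2 * m + 1 - 1 = 2 * m by omega, show 2 * m / 2 = m by omega,
    Nat.sum_range_abs_sub_two_mul_mul_choose, Nat.cast_choose ℝ (by omega : m ≤ 2 * m),
    show 2 * m - m = m by omega, Nat.factorial_succ]
  push_cast
  field_simp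

/-- for odd `N ≥ 3`, the number of stationary points satisfies
`Σ_{j=0}^{N-1} |N - 2j| C(N-1, j) = N! / (((N-1)/2)!)²`. -/
theorem stmt2 (N : ℕ) (hN : 3 ≤ N) (hodd : Odd N) :
    ∑ j ∈ Finset.range N, |(N : ℝ) - 2 * j| * ((N - 1).choose j : ℝ) =
      (N.factorial : ℝ) / (((N - 1) / 2).factorial : ℝ) ^ 2 :=
  stmt2_general N hodd
end

section
/- Let N ≥ 2 and let c_1,…,c_N be real numbers, with the convention c_0 := c_N. Let 𝓗 be the (N−1)×(N−1) tridiagonal matrix with entries 𝓗_{ij} = δ_{ij}(c_{i−1} + c_i) − δ_{i−1,j} c_{i−1} − δ_{i+1,j} c_i for i,j = 1,…,N−1. Then det 𝓗 = Σ_{j=1}^{N} Π_{k=1, k≠j}^{N} c_k. -/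
open Real Filter

/-!
With `P` the unit lower bidiagonal difference matrix, `D = diag(c_1, …, c_{N-1})` and `J` the
all-ones matrix, `𝓗 = P (D + c_N J) Pᵀ`; the constant `c_N` in the corner entry `c_N + c_1` is
exactly what `P J Pᵀ = e₁ e₁ᵀ` contributes. As `det P = 1`, `det 𝓗 = det (D + c_N J)`, and the
matrix determinant lemma in adjugate form, `det (A + u vᵀ) = det A + vᵀ adj(A) u`, evaluates this
as `∏_{k<N} c_k + c_N Σ_{j<N} ∏_{k≠j, k<N} c_k`, which is `Σ_j ∏_{k≠j} c_k` split by whether `j = N`.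
-/

open Matrix Finset

section MatrixDeterminantLemma

variable {n : Type*} [Fintype n] [DecidableEq n]

theorem Matrix.det_add_replicateCol_mul_replicateRow_eq_add_adjugate_of_isUnit {R : Type*}
    [CommRing R] {A : Matrix n n R} (hA : IsUnit A.det) (u v : n → R) :
    (A + replicateCol Unit u * replicateRow Unit v).det = A.det + v ⬝ᵥ A.adjugate *ᵥ u := by
  rw [det_add_replicateCol_mul_replicateRow hA, det_unique (1 + _), inv_def,
    Matrix.mul_smul, Matrix.smul_mul, Matrix.mul_assoc, ← replicateCol_mulVec, add_apply,
    smul_apply, one_apply_eq, replicateRow_mul_replicateCol_apply, smul_eq_mul, mul_add, mul_one,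
    ← mul_assoc, Ring.mul_inverse_cancel _ hA, one_mul]

theorem Matrix.det_add_replicateCol_mul_replicateRow_eq_add_adjugate (A : Matrix n n ℝ)
    (u v : n → ℝ) :
    (A + replicateCol Unit u * replicateRow Unit v).det = A.det + v ⬝ᵥ A.adjugate *ᵥ u := by
  have hdet (t : ℝ) : (t • 1 + A).det = (-A).charpoly.eval t := by
    rw [eval_charpoly, sub_neg_eq_add, scalar_apply, smul_one_eq_diagonal]
  have hdense : Dense {t : ℝ | (-A).charpoly.eval t ≠ 0} :=
    (Polynomial.finite_setOfPred_isRoot (-A).charpoly_monic.ne_zero).countable.dense_compl ℝ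
  -- `t • 1 + A` is invertible off the finitely many roots of `(-A).charpoly`;
  -- conclude by continuity in `t`.
  have key := Continuous.ext_on hdense
    (f := fun t => (t • 1 + A + replicateCol Unit u * replicateRow Unit v).det)
    (g := fun t => (t • 1 + A).det + v ⬝ᵥ (t • 1 + A).adjugate *ᵥ u)
    (by fun_prop) (by fun_prop) fun t ht =>
      det_add_replicateCol_mul_replicateRow_eq_add_adjugate_of_isUnit
        (isUnit_iff_ne_zero.mpr (by rwa [hdet])) u v
  simpa using congrFun key 0

theorem Matrix.det_diagonal_add_const (d : n → ℝ) (x : ℝ) :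
    (diagonal d + of fun _ _ => x).det = ∏ i, d i + x * ∑ i, ∏ j ∈ univ.erase i, d j := by
  have hconst : (of fun _ _ => x : Matrix n n ℝ) =
      replicateCol Unit (fun _ : n => x) * replicateRow Unit (fun _ : n => (1 : ℝ)) := by
    ext i j
    simp [mul_apply]
  rw [hconst, det_add_replicateCol_mul_replicateRow_eq_add_adjugate, det_diagonal,
    adjugate_diagonal]
  simp [dotProduct, mulVec_diagonal, mul_sum, mul_comm]

end MatrixDeterminantLemma

section DiffMatrix

variable {R : Type*} [CommRing R] {n : ℕ}

variable (R n) in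
def diffMatrix : Matrix (Fin n) (Fin n) R :=
  of fun i j => if i = j then 1 else if (i : ℕ) = j + 1 then -1 else 0

theorem diffMatrix_mul_apply (A : Matrix (Fin n) (Fin n) R) (i j : Fin n) :
    (diffMatrix R n * A) i j = A i j - if h : 0 < (i : ℕ) then A ⟨i - 1, by omega⟩ j else 0 := by
  rw [mul_apply]
  split_ifs with hi
  · rw [Fintype.sum_eq_add i ⟨i - 1, by omega⟩ (Fin.ne_of_val_ne (show (i : ℕ) ≠ i - 1 by omega))]
    · simp [diffMatrix, Fin.ext_iff, show (i : ℕ) ≠ i - 1 by omega, Nat.sub_add_cancel hi,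
        sub_eq_add_neg]
    · intro r hr
      simp only [ne_eq, Fin.ext_iff] at hr
      simp [diffMatrix, Fin.ext_iff, show (i : ℕ) ≠ r by omega, show (i : ℕ) ≠ r + 1 by omega]
  · rw [Fintype.sum_eq_single i]
    · simp [diffMatrix]
    · intro r hr
      simp [diffMatrix, Ne.symm hr, show (i : ℕ) ≠ r + 1 by omega]

theorem mul_diffMatrix_transpose_apply (A : Matrix (Fin n) (Fin n) R) (i j : Fin n) :
    (A * (diffMatrix R n)ᵀ) i j =
      A i j - if h : 0 < (j : ℕ) then A i ⟨j - 1, by omega⟩ else 0 := by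
  change (A * (diffMatrix R n)ᵀ)ᵀ j i = _
  rw [transpose_mul, transpose_transpose, diffMatrix_mul_apply]
  rfl

variable (R n) in
theorem det_diffMatrix : (diffMatrix R n).det = 1 := by
  rw [det_of_isLowerTriangular]
  · simp [diffMatrix]
  · intro i j (hij : (i : ℕ) < j)
    simp [diffMatrix, Fin.ext_iff, hij.ne, show (i : ℕ) ≠ j + 1 by omega]

end DiffMatrix

section ProdErase

variable {M : Type*} [CommMonoid M]

theorem Finset.prod_univ_erase_eq_prod_update {ι : Type*} [Fintype ι] [DecidableEq ι]
    (f : ι → M) (j : ι) : ∏ k ∈ univ.erase j, f k = ∏ k, Function.update f j 1 k := by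
  rw [prod_update_of_mem (mem_univ j), sdiff_singleton_eq_erase, one_mul]

theorem Fin.prod_univ_erase_last {n : ℕ} (f : Fin (n + 1) → M) :
    ∏ k ∈ univ.erase (Fin.last n), f k = ∏ i : Fin n, f i.castSucc := by
  rw [prod_univ_erase_eq_prod_update, Fin.prod_univ_castSucc, Function.update_self, mul_one]
  exact prod_congr rfl fun i _ => Function.update_of_ne (Fin.castSucc_lt_last i).ne _ _

theorem Fin.prod_univ_erase_castSucc {n : ℕ} (f : Fin (n + 1) → M) (j : Fin n) :
    ∏ k ∈ univ.erase j.castSucc, f k = (∏ k ∈ univ.erase j, f k.castSucc) * f (Fin.last n) := by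
  rw [prod_univ_erase_eq_prod_update, prod_univ_erase_eq_prod_update, Fin.prod_univ_castSucc,
    Function.update_of_ne (Fin.castSucc_lt_last j).ne']
  simp only [Function.update_apply_of_injective f (Fin.castSucc_injective n)]

end ProdErase

theorem Fin.sum_prod_univ_erase_succ {R : Type*} [CommSemiring R] {n : ℕ}
    (f : Fin (n + 1) → R) :
    ∑ j, ∏ k ∈ univ.erase j, f k =
      ∏ i : Fin n, f i.castSucc +
        f (Fin.last n) * ∑ j : Fin n, ∏ k ∈ univ.erase j, f k.castSucc := by
  rw [Fin.sum_univ_castSucc, Fin.prod_univ_erase_last, add_comm, mul_sum]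
  simp only [Fin.prod_univ_erase_castSucc, mul_comm]

theorem hessC_succ_eq (n : ℕ) (hN : 0 < n + 1) (c : Fin (n + 1) → ℝ) :
    hessC (n + 1) hN c = diffMatrix ℝ n *
      (diagonal (fun i => c i.castSucc) + of fun _ _ => c (Fin.last n)) * (diffMatrix ℝ n)ᵀ := by
  -- Read `c` through `ℕ`, so that all index bookkeeping becomes arithmetic on naturals.
  obtain ⟨D, hD⟩ : ∃ D : ℕ → ℝ, ∀ k : Fin (n + 1), c k = D k :=
    ⟨fun k => if h : k < n + 1 then c ⟨k, h⟩ else 0, fun k => by simp only [k.isLt, ↓reduceDIte]⟩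
  have hpred (i : Fin n) : ((i : ℕ) + n) % (n + 1) = if 0 < (i : ℕ) then (i : ℕ) - 1 else n := by
    split_ifs with hi
    · rw [show (i : ℕ) + n = i - 1 + (n + 1) by omega, Nat.add_mod_right,
        Nat.mod_eq_of_lt (by omega)]
    · rw [show (i : ℕ) = 0 by omega, zero_add, Nat.mod_eq_of_lt (by omega)]
  ext ⟨a, ha⟩ ⟨b, hb⟩
  rw [mul_diffMatrix_transpose_apply]
  simp only [diffMatrix_mul_apply, hessC, of_apply, Matrix.add_apply, diagonal_apply, hD,
    Fin.val_castSucc, Fin.val_last, Nat.add_sub_cancel, hpred, Fin.ext_iff]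
  split_ifs <;> subst_vars <;> first | (exfalso; omega) | ring

/-- the determinant of the `(N-1) × (N-1)` tridiagonal matrix with
entries `δ_{ij}(c_{i-1} + c_i) - δ_{i-1,j} c_{i-1} - δ_{i+1,j} c_i` (with
`c_0 := c_N`) equals `Σ_{j=1}^N Π_{k ≠ j} c_k`. -/
theorem stmt6 (N : ℕ) (hN : 2 ≤ N) (c : Fin N → ℝ) :
    (hessC N (by omega) c).det = ∑ j : Fin N, ∏ k ∈ Finset.univ.erase j, c k := by
  obtain ⟨n, rfl⟩ : ∃ n, N = n + 1 := ⟨N - 1, by omega⟩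
  rw [hessC_succ_eq, det_mul, det_mul, det_transpose, det_diffMatrix, one_mul, mul_one,
    Fin.sum_prod_univ_erase_succ]
  exact det_diagonal_add_const _ _
end

section
/- Let N ≥ 4 be even and φ ∈ ℝ^N. If θ is a stationary point of F_φ (with θ_N = 0), then the configuration θ′ defined by θ′_k = θ_k + kπ for k = 1,…,N−1 (and θ′_N = 0, which agrees with θ_N + Nπ modulo 2π since N is even) is also a stationary point of F_φ, its variables satisfy s′_k = s_k + π for all k, and the Hessian determinants have opposite signs: det 𝓗(θ′) = − det 𝓗(θ). -/
open Real Filter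

/-!
Adding `k π` to `θ_k` (which is `0` mod `2π` at the fixed site `k = N`, `N` being even) adds `π`
mod `2π` to every bond variable `s_k`, hence negates every `cos s_k`. So it maps `F_φ` to
`2N - F_φ`, which preserves stationary points, and it negates the Hessian, whose size `N - 1` is
odd.
-/

lemma cos_add_pi_add_two_pi_int_mul (x : ℝ) (m : ℤ) : cos (x + π + 2 * π * m) = -cos x := by
  rw [show x + π + 2 * π * m = x + π + m * (2 * π) by ring, cos_add_int_mul_two_pi, cos_add_pi]

section BondShift

variable {N : ℕ} (hN : 0 < N)

def ShiftsBondsByPi (d : Fin N → ℝ) : Prop :=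
  ∀ j : Fin N, ∃ m : ℤ, d ⟨((j : ℕ) + 1) % N, Nat.mod_lt _ hN⟩ - d j = π + 2 * π * m

lemma sVar_add (φ θ d : Fin N → ℝ) (j : Fin N) :
    sVar N hN φ (θ + d) j
      = sVar N hN φ θ j + (d ⟨((j : ℕ) + 1) % N, Nat.mod_lt _ hN⟩ - d j) := by
  simp only [sVar, Pi.add_apply]
  ring

variable {hN} {d : Fin N → ℝ} (hd : ShiftsBondsByPi hN d) (φ : Fin N → ℝ)
include hd

lemma ShiftsBondsByPi.cos_sVar_add (θ : Fin N → ℝ) (j : Fin N) :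
    cos (sVar N hN φ (θ + d) j) = -cos (sVar N hN φ θ j) := by
  obtain ⟨m, hm⟩ := hd j
  rw [sVar_add, hm, ← add_assoc, cos_add_pi_add_two_pi_int_mul]

lemma ShiftsBondsByPi.Fxy_add (θ : Fin N → ℝ) : Fxy N hN φ (θ + d) = 2 * N - Fxy N hN φ θ := by
  simp only [Fxy, hd.cos_sVar_add, sub_neg_eq_add, Finset.sum_add_distrib, Finset.sum_sub_distrib,
    Finset.sum_const, Finset.card_univ, Fintype.card_fin, nsmul_eq_mul, mul_one]
  ring

lemma ShiftsBondsByPi.isStationaryPt_add {θ : Fin N → ℝ} (hθ : IsStationaryPt N hN φ θ) :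
    IsStationaryPt N hN φ (θ + d) := by
  intro k hk
  have hF : (fun t => Fxy N hN φ (Function.update (θ + d) k t))
      = fun t => 2 * N - Fxy N hN φ (Function.update θ k (t - d k)) := by
    funext t
    rw [← hd.Fxy_add]
    simpa using congrArg (Fxy N hN φ) (Function.update_add θ d k (t - d k) (d k))
  rw [hF, deriv_const_sub, Pi.add_apply,
    deriv_comp_sub_const (fun t => Fxy N hN φ (Function.update θ k t)), add_sub_cancel_right,
    hθ k hk, neg_zero]

lemma ShiftsBondsByPi.hessAt_add (θ : Fin N → ℝ) : hessAt N hN φ (θ + d) = -hessAt N hN φ θ := by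
  ext i j
  simp only [hessAt, hessC, Matrix.of_apply, Matrix.neg_apply, hd.cos_sVar_add]
  split_ifs <;> ring

end BondShift

lemma Matrix.det_neg_of_odd_card {n R : Type*} [Fintype n] [DecidableEq n] [CommRing R]
    (A : Matrix n n R) (h : Odd (Fintype.card n)) : (-A).det = -A.det := by
  rw [Matrix.det_neg, h.neg_one_pow, neg_one_mul]

lemma exists_natCast_mod_mul_pi {N : ℕ} (hN : Even N) (n : ℕ) :
    ∃ m : ℤ, ((n % N : ℕ) : ℝ) * π = n * π + 2 * π * m := by
  obtain ⟨t, rfl⟩ := hN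
  refine ⟨-(t * (n / (t + t)) : ℕ), ?_⟩
  have h : ((n % (t + t) : ℕ) : ℝ) = n - (t + t : ℕ) * (n / (t + t) : ℕ) := by
    rw [eq_sub_iff_add_eq]
    exact_mod_cast Nat.mod_add_div n (t + t)
  generalize n / (t + t) = q at h
  rw [h]
  push_cast
  ring

/-- The shift `θ_k ↦ θ_k + kπ` in 0-based indexing, reduced mod `N` so that it vanishes at
`lastIdx`. -/
noncomputable def piShift (N : ℕ) : Fin N → ℝ :=
  fun i => (((i : ℕ) + 1) % N : ℕ) * π

lemma shiftsBondsByPi_piShift {N : ℕ} (hN : 0 < N) (heven : Even N) :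
    ShiftsBondsByPi hN (piShift N) := by
  intro j
  obtain ⟨m, hm⟩ := exists_natCast_mod_mul_pi heven (((j : ℕ) + 1) % N + 1)
  refine ⟨m, ?_⟩
  simp only [piShift, hm]
  push_cast
  ring

lemma add_piShift_eq {N : ℕ} (hN : 0 < N) (θ : Fin N → ℝ) (hlast : θ (lastIdx N hN) = 0) :
    θ + piShift N = fun j => if j = lastIdx N hN then 0 else θ j + ((j : ℕ) + 1) * π := by
  funext j
  split_ifs with hj
  · subst hj
    simpa [piShift, lastIdx, Nat.sub_add_cancel hN] using hlast
  · have hj' : (j : ℕ) + 1 < N := by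
      have : (j : ℕ) ≠ N - 1 := fun h => hj (Fin.ext h)
      omega
    simp [piShift, Nat.mod_eq_of_lt hj']

/-- for even `N`, shifting a stationary point by `θ'_k = θ_k + kπ`
(`k = 1, …, N-1`, and `θ'_N = 0`) yields another stationary point whose variables
satisfy `s'_k = s_k + π (mod 2π)` for all `k`, and whose Hessian determinant has
the opposite sign: `det 𝓗(θ') = - det 𝓗(θ)`. -/
theorem stmt10 (N : ℕ) (hN : 4 ≤ N) (heven : Even N) (φ θ : Fin N → ℝ)
    (hlast : θ (lastIdx N (by omega)) = 0)
    (hstat : IsStationaryPt N (by omega) φ θ) :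
    let θ' : Fin N → ℝ := fun j =>
      if j = lastIdx N (by omega) then 0 else θ j + ((j : ℕ) + 1) * π
    IsStationaryPt N (by omega) φ θ' ∧
    (∀ k : Fin N, ∃ m : ℤ,
      sVar N (by omega) φ θ' k = sVar N (by omega) φ θ k + π + 2 * π * m) ∧
    (hessAt N (by omega) φ θ').det = -(hessAt N (by omega) φ θ).det := by
  intro θ'
  have hN0 : 0 < N := by omega
  have hθ' : θ' = θ + piShift N := (add_piShift_eq hN0 θ hlast).symm
  have hd := shiftsBondsByPi_piShift hN0 heven
  have hodd : Odd (Fintype.card (Fin (N - 1))) := by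
    obtain ⟨t, rfl⟩ := heven
    exact ⟨t - 1, by simp only [Fintype.card_fin]; omega⟩
  refine ⟨?_, fun k => ?_, ?_⟩
  · rw [hθ']
    exact hd.isStationaryPt_add φ hstat
  · obtain ⟨m, hm⟩ := hd k
    exact ⟨m, by rw [hθ', sVar_add, hm, add_assoc]⟩
  · rw [hθ', hd.hessAt_add, Matrix.det_neg_of_odd_card _ hodd]
end
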